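/- Let κ be a positive integer and c a real number with c ∉ {2, 3, ..., κ+1}. Then for every real z, lim_{a→1} (a-1)^κ m_κ^{1/a, 2-c}(z) = (-1)^κ C(κ+1-c, κ), where C denotes the generalized binomial coefficient. -/

import Mathlib

/-! After multiplication by `(a - 1)^κ` the prefactor of `m_κ^{1/a, 2-c}` cancels exactly, leaving
`∑ⱼ aʲ C(z, j) C(c - 2 - z, κ - j)`, a polynomial in `a`. Its value at `a = 1` is `C(c - 2, κ)` by
Chu–Vandermonde, and upper negation turns this into `(-1)^κ C(κ + 1 - c, κ)`. -/

open Filter Topology Finset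

/-- Generalized binomial coefficient C(y, k) = y(y-1)⋯(y-k+1)/k!. -/
noncomputable def gbinom (y : ℝ) (k : ℕ) : ℝ :=
  (∏ i ∈ Finset.range k, (y - i)) / (Nat.factorial k)

/-- Pochhammer symbol (y)_k = y(y+1)⋯(y+k-1). -/
noncomputable def poch (y : ℝ) (k : ℕ) : ℝ :=
  ∏ i ∈ Finset.range k, (y + i)

/-- Meixner polynomial m_n^{a,c}(x). -/
noncomputable def meixner (n : ℕ) (a c x : ℝ) : ℝ :=
  (a ^ n / (1 - a) ^ n) *
    ∑ j ∈ Finset.range (n + 1), (a⁻¹) ^ j * gbinom x j * gbinom (-x - c) (n - j)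

theorem gbinom_eq_choose (y : ℝ) (k : ℕ) : gbinom y k = Ring.choose y k := by
  rw [Ring.choose_eq_smul, ← Polynomial.aeval_eq_smeval, Polynomial.aeval_def,
    ← Polynomial.eval_map, descPochhammer_map, descPochhammer_eval_eq_prod_range, gbinom,
    smul_eq_mul, inv_mul_eq_div]

theorem gbinom_add_eq (x y : ℝ) (n : ℕ) :
    gbinom (x + y) n = ∑ j ∈ range (n + 1), gbinom x j * gbinom y (n - j) := by
  simp only [gbinom_eq_choose]
  rw [Ring.add_choose_eq n (Commute.all x y), Nat.sum_antidiagonal_eq_sum_range_succ_mk]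

theorem gbinom_neg (y : ℝ) (k : ℕ) : gbinom (-y) k = (-1) ^ k * gbinom (y + k - 1) k := by
  rw [gbinom_eq_choose, gbinom_eq_choose, Ring.choose_neg, Units.smul_def, Int.negOnePow_def]
  simp

theorem sub_one_pow_mul_meixner_inv (n : ℕ) {a : ℝ} (h0 : a ≠ 0) (h1 : a ≠ 1) (c x : ℝ) :
    (a - 1) ^ n * meixner n a⁻¹ c x =
      ∑ j ∈ range (n + 1), a ^ j * gbinom x j * gbinom (-x - c) (n - j) := by
  have hscale : (a - 1) ^ n * (a⁻¹ ^ n / (1 - a⁻¹) ^ n) = 1 := by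
    have hne : a - 1 ≠ 0 := sub_ne_zero.mpr h1
    rw [← mul_div_assoc, ← mul_pow, ← div_pow, show (a - 1) * a⁻¹ / (1 - a⁻¹) = 1 by
      field_simp, one_pow]
  rw [meixner, ← mul_assoc, hscale, one_mul, inv_inv]

theorem stmt6_general (κ : ℕ) (c : ℝ) (z : ℝ) :
    Tendsto (fun a : ℝ => (a - 1) ^ κ * meixner κ a⁻¹ (2 - c) z)
      (𝓝[({0, 1} : Set ℝ)ᶜ] (1 : ℝ)) (𝓝 ((-1) ^ κ * gbinom ((κ : ℝ) + 1 - c) κ)) := by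
  set p : ℝ → ℝ := fun a ↦
    ∑ j ∈ range (κ + 1), a ^ j * gbinom z j * gbinom (-z - (2 - c)) (κ - j)
  have hp : p =ᶠ[𝓝[({0, 1} : Set ℝ)ᶜ] 1] fun a ↦ (a - 1) ^ κ * meixner κ a⁻¹ (2 - c) z :=
    eventually_nhdsWithin_of_forall fun a ha ↦ by
      simp only [Set.mem_compl_iff, Set.mem_insert_iff, Set.mem_singleton_iff, not_or] at ha
      exact (sub_one_pow_mul_meixner_inv κ ha.1 ha.2 _ _).symm
  have hp1 : p 1 = (-1) ^ κ * gbinom ((κ : ℝ) + 1 - c) κ := by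
    simp only [p, one_pow, one_mul]
    rw [← gbinom_add_eq, show z + (-z - (2 - c)) = -(2 - c) by ring, gbinom_neg,
      show 2 - c + κ - 1 = (κ : ℝ) + 1 - c by ring]
  have hcont : Continuous p := by fun_prop
  rw [← hp1]
  exact ((hcont.tendsto 1).mono_left nhdsWithin_le_nhds).congr' hp

theorem stmt6 (κ : ℕ) (hκ : 0 < κ) (c : ℝ)
    (hc : ∀ j : ℕ, 2 ≤ j → j ≤ κ + 1 → c ≠ (j : ℝ)) (z : ℝ) :
    Tendsto (fun a : ℝ => (a - 1) ^ κ * meixner κ a⁻¹ (2 - c) z)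
      (𝓝[({0, 1} : Set ℝ)ᶜ] (1 : ℝ)) (𝓝 ((-1) ^ κ * gbinom ((κ : ℝ) + 1 - c) κ)) :=
  stmt6_general κ c z
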